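/- Let a DeFG without classical variables be given. Let {m_{j→a}, m_{a→j} : S_j × S_j → ℂ}_{(j,a)∈E} be messages such that each message, viewed as an S_j×S_j matrix, is positive semidefinite. Define Z_a := ∑_{s_{∂a}, s̃_{∂a}} f_a(s_{∂a}, s̃_{∂a})·∏_{j∈∂a} m_{j→a}(s_j, s̃_j) for a ∈ F, Z_j := ∑_{s_j, s̃_j} ∏_{a∈∂j} m_{a→j}(s_j, s̃_j) for j ∈ V, Z_{j,a} := ∑_{s_j, s̃_j} m_{j→a}(s_j, s̃_j)·m_{a→j}(s_j, s̃_j) for (j,a) ∈ E, and the induced partition sum Z_induced := (∏_{a∈F} Z_a · ∏_{j∈V} Z_j) / ∏_{(j,a)∈E} Z_{j,a}. Then: (i) if Z_{j,a} ≠ 0 for all (j,a) ∈ E, then Z_induced is a nonnegative real number; (ii) if moreover Z_a ≠ 0 and Z_j ≠ 0 for all a ∈ F and j ∈ V, then the following are equivalent: (A) for every (k,c) ∈ E and every η : S_k × S_k → ℂ whose matrix is positive semidefinite, the real directional derivatives (d/dh)|_{h=0} Z_induced evaluated with m_{c→k} replaced by m_{c→k} + h·η, and with m_{k→c} replaced by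 m_{k→c} + h·η (all other messages fixed), both vanish; (B) the messages are a BP fixed point: for every (k,c) ∈ E there exist positive real constants such that m_{k→c}(s_k, s̃_k) ∝ ∏_{a∈∂k∖{c}} m_{a→k}(s_k, s̃_k) and m_{c→k}(s_k, s̃_k) ∝ ∑_{s_{∂c∖{k}}, s̃_{∂c∖{k}}} f_c(s_{∂c}, s̃_{∂c})·∏_{j∈∂c∖{k}} m_{j→c}(s_j, s̃_j) for all s_k, s̃_k. -/

import Mathlib

/-!
Each local partition sum is the sum of all entries of a positive semidefinite matrix, built from
`f_a` and the messages by Hadamard products, tensor products and restriction to the diagonal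
(Schur product theorem, Gram factorizations). Hence `Z_induced` is a nonnegative real.

Moving one message `m_{c→k}` to `m_{c→k} + t η` moves only `Z_k` and `Z_{k,c}`, both affinely.
With the bilinear pairing `⟪X, Y⟫ = ∑ X ⊙ Y` we have `Z_k = ⟪m_{c→k}, A⟫` and
`Z_{k,c} = ⟪m_{k→c}, m_{c→k}⟫`, where `A = ∏_{a ∈ ∂k ∖ c} m_{a→k}` is the BP update, so the
derivative vanishes iff `⟪η, A⟫ Z_{k,c} = Z_k ⟪η, m_{k→c}⟫`. Positive semidefinite `η` span all
matrices, so this holds for all of them iff `Z_{k,c} A = Z_k m_{k→c}`, i.e. `m_{k→c}` is the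
positive multiple `Z_{k,c} / Z_k` of `A`. Moving `m_{k→c}` is symmetric, with `Z_c` in place of
`Z_k` and the factor-side update in place of `A`.
-/

open Finset
open scoped ComplexOrder

section

variable {V F : Type} [Fintype V] [Fintype F] [DecidableEq V] [DecidableEq F]

/-- One message per edge `(j, a)`; below, `mv` holds the messages `m_{j→a}` and `mf` the
messages `m_{a→j}`. -/
abbrev DeFGMsg (E : Finset (V × F)) (S : V → Type) : Type :=
  ∀ (j : V) (a : F), (j, a) ∈ E → S j → S j → ℂ

variable (E : Finset (V × F)) (S : V → Type) [∀ j, Fintype (S j)] [∀ j, DecidableEq (S j)]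

/-- `Z_a` -/
noncomputable def Zfac
    (f : ∀ a : F, (∀ j : {j : V // (j, a) ∈ E}, S j.1) →
                  (∀ j : {j : V // (j, a) ∈ E}, S j.1) → ℂ)
    (mv : DeFGMsg E S) (a : F) : ℂ :=
  ∑ s : ∀ j : {j : V // (j, a) ∈ E}, S j.1,
    ∑ st : ∀ j : {j : V // (j, a) ∈ E}, S j.1,
      f a s st * ∏ j : {j : V // (j, a) ∈ E}, mv j.1 a j.2 (s j) (st j)

/-- `Z_j` -/
noncomputable def Zvar (mf : DeFGMsg E S) (j : V) : ℂ :=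
  ∑ sj : S j, ∑ stj : S j, ∏ a : {a : F // (j, a) ∈ E}, mf j a.1 a.2 sj stj

/-- `Z_{j,a}` -/
noncomputable def Zedge (mv mf : DeFGMsg E S) (j : V) (a : F) (h : (j, a) ∈ E) : ℂ :=
  ∑ sj : S j, ∑ stj : S j, mv j a h sj stj * mf j a h sj stj

noncomputable def Zinduced
    (f : ∀ a : F, (∀ j : {j : V // (j, a) ∈ E}, S j.1) →
                  (∀ j : {j : V // (j, a) ∈ E}, S j.1) → ℂ)
    (mv mf : DeFGMsg E S) : ℂ :=
  ((∏ a : F, Zfac E S f mv a) * ∏ j : V, Zvar E S mf j) /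
    ∏ e : {p : V × F // p ∈ E}, Zedge E S mv mf e.1.1 e.1.2 e.2

noncomputable def updMsg (m : DeFGMsg E S) (k : V) (c : F) (η : S k → S k → ℂ) (t : ℝ) :
    DeFGMsg E S :=
  fun j a h sj stj =>
    if hj : j = k ∧ a = c then
      m j a h sj stj +
        (t : ℂ) * η (cast (congrArg S hj.1) sj) (cast (congrArg S hj.1) stj)
    else m j a h sj stj

end

open Matrix

namespace Matrix

variable {𝕜 : Type*} [RCLike 𝕜]

theorem PosSemidef.sum_sum_nonneg {n : Type*} [Fintype n] {A : Matrix n n 𝕜}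
    (hA : A.PosSemidef) : 0 ≤ ∑ i, ∑ j, A i j := by
  simpa [dotProduct, mulVec, Finset.mul_sum] using hA.dotProduct_mulVec_nonneg (fun _ => 1)

open scoped MatrixOrder in
theorem PosSemidef.piProd {ι : Type*} [Fintype ι] [DecidableEq ι] {n : ι → Type*}
    [∀ i, Fintype (n i)] {A : ∀ i, Matrix (n i) (n i) 𝕜} (hA : ∀ i, (A i).PosSemidef) :
    (of fun s t : (∀ i, n i) => ∏ i, A i (s i) (t i)).PosSemidef := by
  classical
  -- if `A i = (B i)ᴴ * B i`, the product matrix is `Bᴴ * B` with `B r s = ∏ i, B i (r i) (s i)`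
  choose B hB using fun i => CStarAlgebra.nonneg_iff_eq_star_mul_self.mp (hA i).nonneg
  convert posSemidef_conjTranspose_mul_self (of fun r s : (∀ i, n i) => ∏ i, B i (r i) (s i))
  ext s t
  simp only [of_apply, hB, star_eq_conjTranspose, mul_apply, conjTranspose_apply, star_prod,
    Fintype.prod_sum, Finset.prod_mul_distrib]

theorem eq_zero_of_forall_star_dotProduct_mulVec_eq_zero {n : Type*} [Fintype n]
    {X : Matrix n n ℂ} (h : ∀ w : n → ℂ, star w ⬝ᵥ X *ᵥ w = 0) : X = 0 := by
  classical
  have hT := (inner_map_self_eq_zero (toLpLin 2 2 X : EuclideanSpace ℂ n →ₗ[ℂ] _)).mp fun x => by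
    rw [← inner_conj_symm, EuclideanSpace.inner_eq_star_dotProduct, toLpLin_apply,
      WithLp.ofLp_toLp, dotProduct_comm, h, map_zero]
  exact EmbeddingLike.map_eq_zero_iff.mp hT

end Matrix

section Pairing

variable {n : Type*} [Fintype n]

def pairing (X Y : n → n → ℂ) : ℂ :=
  ∑ s, ∑ t, X s t * Y s t

theorem pairing_comm (X Y : n → n → ℂ) : pairing X Y = pairing Y X := by
  simp only [pairing, mul_comm]

theorem pairing_add_mul_left (X η Y : n → n → ℂ) (c : ℂ) :
    pairing (fun s t => X s t + c * η s t) Y = pairing X Y + c * pairing η Y := by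
  simp only [pairing, add_mul, Finset.sum_add_distrib, Finset.mul_sum, mul_assoc]

theorem pairing_add_mul_right (X η Y : n → n → ℂ) (c : ℂ) :
    pairing Y (fun s t => X s t + c * η s t) = pairing Y X + c * pairing Y η := by
  rw [pairing_comm, pairing_add_mul_left, pairing_comm X, pairing_comm η]

theorem pairing_mul_left (c : ℂ) (X Y : n → n → ℂ) :
    pairing (fun s t => c * X s t) Y = c * pairing X Y := by
  simp only [pairing, Finset.mul_sum, mul_assoc]

theorem pairing_mul_sub_mul_right (η X Y : n → n → ℂ) (a b : ℂ) :
    pairing η (fun s t => a * X s t - b * Y s t) = a * pairing η X - b * pairing η Y := by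
  simp only [pairing, Finset.mul_sum, ← Finset.sum_sub_distrib]
  exact sum_congr rfl fun _ _ => sum_congr rfl fun _ _ => by ring

theorem pairing_vecMulVec_star_self (w : n → ℂ) (X : n → n → ℂ) :
    pairing (vecMulVec (star w) w) X = star w ⬝ᵥ of X *ᵥ w := by
  simp only [pairing, vecMulVec_apply, dotProduct, mulVec, of_apply, Finset.mul_sum]
  exact sum_congr rfl fun _ _ => sum_congr rfl fun _ _ => by ring

theorem eq_zero_of_forall_posSemidef_pairing_eq_zero {X : n → n → ℂ}
    (h : ∀ η : n → n → ℂ, (of η).PosSemidef → pairing η X = 0) : X = 0 :=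
  Matrix.eq_zero_of_forall_star_dotProduct_mulVec_eq_zero fun w =>
    pairing_vecMulVec_star_self w X ▸ h _ (posSemidef_vecMulVec_star_self w)

theorem forall_pairing_eq_iff_exists_pos_mul {A M N : n → n → ℂ} (hMN : 0 < pairing M N)
    (hNA : 0 < pairing N A) :
    (∀ η : n → n → ℂ, (of η).PosSemidef →
        pairing η A * pairing M N = pairing N A * pairing η M) ↔
      ∃ γ : ℝ, 0 < γ ∧ ∀ s t, M s t = γ * A s t := by
  constructor
  · intro h
    obtain ⟨γ, hγ, hγeq⟩ := RCLike.pos_iff_exists_ofReal.mp (div_pos hMN hNA)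
    -- positive semidefinite matrices span all matrices, which forces `⟪M,N⟫ A = ⟪N,A⟫ M`
    have hX := eq_zero_of_forall_posSemidef_pairing_eq_zero
      (X := fun s t => pairing M N * A s t - pairing N A * M s t) fun η hη => by
        rw [pairing_mul_sub_mul_right]
        linear_combination h η hη
    refine ⟨γ, hγ, fun s t => ?_⟩
    have hst : pairing M N * A s t - pairing N A * M s t = 0 := congrFun₂ hX s t
    simp only [RCLike.ofReal_eq_complex_ofReal] at hγeq
    rw [hγeq]
    field_simp
    linear_combination -hst
  · rintro ⟨γ, -, hγ⟩ η -
    have hM : M = fun s t => γ * A s t := funext₂ hγ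
    rw [hM, pairing_mul_left, pairing_comm N A, pairing_comm η (fun s t => (γ : ℂ) * A s t),
      pairing_mul_left, pairing_comm A η]
    ring

end Pairing

theorem deriv_mul_affine_div_mul_affine_eq_zero_iff {P Q a b α β : ℂ} (hP : P ≠ 0)
    (hQ : Q ≠ 0) (hb : b ≠ 0) :
    deriv (fun t : ℝ => P * (a + t * α) / (Q * (b + t * β))) 0 = 0 ↔ α * b = a * β := by
  have hline : ∀ z w : ℂ, HasDerivAt (fun t : ℝ => z + t * w) w 0 := fun z w => by
    simpa using ((hasDerivAt_id (0 : ℝ)).ofReal_comp.mul_const w).const_add z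
  have hden : Q * (b + ((0 : ℝ) : ℂ) * β) ≠ 0 := by simpa using mul_ne_zero hQ hb
  change deriv ((fun t : ℝ => P * (a + t * α)) / fun t : ℝ => Q * (b + t * β)) 0 = 0 ↔ _
  rw [(((hline a α).const_mul P).div ((hline b β).const_mul Q) hden).deriv]
  simp only [Complex.ofReal_zero, zero_mul, add_zero, div_eq_zero_iff, pow_eq_zero_iff,
    ne_eq, OfNat.ofNat_ne_zero, not_false_eq_true, mul_eq_zero, hQ, hb, or_self, or_false]
  constructor
  · intro h
    have : P * Q * (α * b - a * β) = 0 := by linear_combination h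
    simpa [hP, hQ, sub_eq_zero] using this
  · intro h
    linear_combination P * Q * h

theorem Fintype.prod_eq_mul_prod_erase_of_ne {ι M : Type*} [CommMonoid M] [Fintype ι]
    [DecidableEq ι] {g g' : ι → M} (i : ι) (h : ∀ j ≠ i, g j = g' j) :
    ∏ j, g j = g i * ∏ j ∈ univ.erase i, g' j := by
  rw [← mul_prod_erase univ g (mem_univ i)]
  exact congrArg _ (Finset.prod_congr rfl fun j hj => h j (ne_of_mem_erase hj))

theorem Fintype.prod_subtype_eq_mul_prod_filter_ne {α M : Type*} [CommMonoid M]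
    [DecidableEq α] {p : α → Prop} [Fintype {x // p x}] (g : {x // p x} → M) {x₀ : α}
    (hx₀ : p x₀) :
    ∏ x, g x = g ⟨x₀, hx₀⟩ * ∏ x ∈ univ.filter (fun x : {x // p x} => (x : α) ≠ x₀), g x := by
  rw [← mul_prod_erase univ g (mem_univ _)]
  congr 2
  ext x
  simp [Subtype.ext_iff]

theorem sum_sum_mul_comp_eq_pairing {m n : Type*} [Fintype m] [Fintype n] [DecidableEq n]
    (π : m → n) (M : n → n → ℂ) (G : m → m → ℂ) :
    ∑ s, ∑ s', M (π s) (π s') * G s s' =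
      pairing M fun x x' =>
        ∑ s ∈ univ.filter (π · = x), ∑ s' ∈ univ.filter (π · = x'), G s s' := by
  simp only [pairing, Finset.mul_sum]
  calc ∑ s, ∑ s', M (π s) (π s') * G s s'
      = ∑ x, ∑ s ∈ univ.filter (π · = x), ∑ x', ∑ s' ∈ univ.filter (π · = x'),
          M (π s) (π s') * G s s' := by simp only [Finset.sum_fiberwise]
    _ = ∑ x, ∑ s ∈ univ.filter (π · = x), ∑ x', ∑ s' ∈ univ.filter (π · = x'),
          M x x' * G s s' :=
        sum_congr rfl fun _ _ => sum_congr rfl fun _ hs => sum_congr rfl fun _ _ =>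
          sum_congr rfl fun _ hs' => by rw [(mem_filter.mp hs).2, (mem_filter.mp hs').2]
    _ = _ := sum_congr rfl fun _ _ => sum_comm

section

variable {V F : Type} {E : Finset (V × F)} {S : V → Type}

abbrev DeFGFactors (E : Finset (V × F)) (S : V → Type) : Type :=
  ∀ a : F, (∀ j : {j : V // (j, a) ∈ E}, S j.1) → (∀ j : {j : V // (j, a) ∈ E}, S j.1) → ℂ

theorem ne_of_ne_edge {k : V} {c : F} {h : (k, c) ∈ E} {e : {p : V × F // p ∈ E}}
    (he : e ≠ ⟨(k, c), h⟩) : ¬(e.1.1 = k ∧ e.1.2 = c) :=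
  fun hkc => he (Subtype.ext (Prod.ext hkc.1 hkc.2))

section

variable [∀ j, Fintype (S j)]

theorem Zedge_eq_pairing (mv mf : DeFGMsg E S) (j : V) (a : F) (h : (j, a) ∈ E) :
    Zedge E S mv mf j a h = pairing (mv j a h) (mf j a h) :=
  rfl

theorem Zedge_nonneg {mv mf : DeFGMsg E S} {j : V} {a : F} {h : (j, a) ∈ E}
    (hmv : (of (mv j a h)).PosSemidef) (hmf : (of (mf j a h)).PosSemidef) :
    0 ≤ Zedge E S mv mf j a h :=
  (hmv.hadamard hmf).sum_sum_nonneg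

end

variable [DecidableEq V] [DecidableEq F]

theorem updMsg_self (m : DeFGMsg E S) (k : V) (c : F) (η : S k → S k → ℂ) (t : ℝ)
    (h : (k, c) ∈ E) :
    updMsg E S m k c η t k c h = fun s s' => m k c h s s' + t * η s s' := by
  funext s s'
  simp [updMsg]

theorem updMsg_of_ne (m : DeFGMsg E S) (k : V) (c : F) (η : S k → S k → ℂ) (t : ℝ)
    {j : V} {a : F} (hne : ¬(j = k ∧ a = c)) (h : (j, a) ∈ E) :
    updMsg E S m k c η t j a h = m j a h := by
  funext s s'
  simp [updMsg, hne]

section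

variable [Fintype F]

def bpVarMsg (mf : DeFGMsg E S) (k : V) (c : F) : S k → S k → ℂ :=
  fun s s' =>
    ∏ a ∈ univ.filter (fun a : {a : F // (k, a) ∈ E} => (a : F) ≠ c), mf k a.1 a.2 s s'

theorem bpVarMsg_updMsg (mf : DeFGMsg E S) (k : V) (c : F) (η : S k → S k → ℂ) (t : ℝ) :
    bpVarMsg (updMsg E S mf k c η t) k c = bpVarMsg mf k c := by
  funext s s'
  refine Finset.prod_congr rfl fun a ha => ?_
  rw [updMsg_of_ne mf k c η t (fun hkc => (mem_filter.mp ha).2 hkc.2)]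

end

variable [∀ j, Fintype (S j)]

theorem Zedge_updMsg_mf_self (mv mf : DeFGMsg E S) (k : V) (c : F) (h : (k, c) ∈ E)
    (η : S k → S k → ℂ) (t : ℝ) :
    Zedge E S mv (updMsg E S mf k c η t) k c h =
      Zedge E S mv mf k c h + t * pairing (mv k c h) η := by
  rw [Zedge, updMsg_self]
  exact pairing_add_mul_right _ _ _ _

theorem Zedge_updMsg_mv_self (mv mf : DeFGMsg E S) (k : V) (c : F) (h : (k, c) ∈ E)
    (η : S k → S k → ℂ) (t : ℝ) :
    Zedge E S (updMsg E S mv k c η t) mf k c h =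
      Zedge E S mv mf k c h + t * pairing η (mf k c h) := by
  rw [Zedge, updMsg_self]
  exact pairing_add_mul_left _ _ _ _

theorem Zedge_updMsg_mf_of_ne (mv mf : DeFGMsg E S) (k : V) (c : F) (η : S k → S k → ℂ)
    (t : ℝ) {j : V} {a : F} (hne : ¬(j = k ∧ a = c)) (h : (j, a) ∈ E) :
    Zedge E S mv (updMsg E S mf k c η t) j a h = Zedge E S mv mf j a h := by
  rw [Zedge, updMsg_of_ne mf k c η t hne h, Zedge]

theorem Zedge_updMsg_mv_of_ne (mv mf : DeFGMsg E S) (k : V) (c : F) (η : S k → S k → ℂ)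
    (t : ℝ) {j : V} {a : F} (hne : ¬(j = k ∧ a = c)) (h : (j, a) ∈ E) :
    Zedge E S (updMsg E S mv k c η t) mf j a h = Zedge E S mv mf j a h := by
  rw [Zedge, updMsg_of_ne mv k c η t hne h, Zedge]

section

variable [Fintype F]

theorem Zvar_eq_pairing (mf : DeFGMsg E S) {k : V} {c : F} (h : (k, c) ∈ E) :
    Zvar E S mf k = pairing (mf k c h) (bpVarMsg mf k c) :=
  sum_congr rfl fun s _ => sum_congr rfl fun s' _ =>
    Fintype.prod_subtype_eq_mul_prod_filter_ne
      (fun a : {a : F // (k, a) ∈ E} => mf k a.1 a.2 s s') h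

theorem Zvar_nonneg {mf : DeFGMsg E S} {j : V} (hmf : ∀ a h, (of (mf j a h)).PosSemidef) :
    0 ≤ Zvar E S mf j :=
  ((PosSemidef.piProd fun a : {a : F // (j, a) ∈ E} => hmf a.1 a.2).submatrix
    fun s _ => s).sum_sum_nonneg

theorem Zvar_updMsg_self (mf : DeFGMsg E S) {k : V} {c : F} (h : (k, c) ∈ E)
    (η : S k → S k → ℂ) (t : ℝ) :
    Zvar E S (updMsg E S mf k c η t) k = Zvar E S mf k + t * pairing η (bpVarMsg mf k c) := by
  rw [Zvar_eq_pairing _ h, bpVarMsg_updMsg, updMsg_self, pairing_add_mul_left,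
    ← Zvar_eq_pairing _ h]

theorem Zvar_updMsg_of_ne (mf : DeFGMsg E S) (k : V) (c : F) (η : S k → S k → ℂ) (t : ℝ)
    {j : V} (hj : j ≠ k) : Zvar E S (updMsg E S mf k c η t) j = Zvar E S mf j :=
  sum_congr rfl fun _ _ => sum_congr rfl fun _ _ => Finset.prod_congr rfl fun a _ => by
    rw [updMsg_of_ne mf k c η t (fun hkc => hj hkc.1)]

end

section

variable [Fintype V]

theorem Zfac_nonneg {f : DeFGFactors E S} {mv : DeFGMsg E S} {a : F}
    (hf : (of fun s s' => f a s s').PosSemidef) (hmv : ∀ j h, (of (mv j a h)).PosSemidef) :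
    0 ≤ Zfac E S f mv a :=
  (hf.hadamard (PosSemidef.piProd fun j : {j : V // (j, a) ∈ E} => hmv j.1 j.2)).sum_sum_nonneg

theorem Zfac_updMsg_of_ne (f : DeFGFactors E S) (mv : DeFGMsg E S) (k : V) (c : F)
    (η : S k → S k → ℂ) (t : ℝ) {a : F} (ha : a ≠ c) :
    Zfac E S f (updMsg E S mv k c η t) a = Zfac E S f mv a :=
  sum_congr rfl fun _ _ => sum_congr rfl fun _ _ => congrArg _ <|
    Finset.prod_congr rfl fun j _ => by rw [updMsg_of_ne mv k c η t (fun hkc => ha hkc.2)]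

variable [∀ j, DecidableEq (S j)]

def bpFacMsg (f : DeFGFactors E S) (mv : DeFGMsg E S) (k : V) (c : F) (h : (k, c) ∈ E) :
    S k → S k → ℂ :=
  fun sk stk =>
    ∑ s ∈ univ.filter (fun s : ∀ j : {j : V // (j, c) ∈ E}, S j.1 => s ⟨k, h⟩ = sk),
      ∑ st ∈ univ.filter (fun st : ∀ j : {j : V // (j, c) ∈ E}, S j.1 => st ⟨k, h⟩ = stk),
        f c s st *
          ∏ j ∈ univ.filter (fun j : {j : V // (j, c) ∈ E} => (j : V) ≠ k),
            mv j.1 c j.2 (s j) (st j)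

theorem Zfac_eq_pairing (f : DeFGFactors E S) (mv : DeFGMsg E S) {k : V} {c : F}
    (h : (k, c) ∈ E) :
    Zfac E S f mv c = pairing (mv k c h) (bpFacMsg f mv k c h) := by
  have hfiber := sum_sum_mul_comp_eq_pairing
    (fun s : ∀ j : {j : V // (j, c) ∈ E}, S j.1 => s ⟨k, h⟩) (mv k c h) fun s s' =>
      f c s s' *
        ∏ j ∈ univ.filter (fun j : {j : V // (j, c) ∈ E} => (j : V) ≠ k), mv j.1 c j.2 (s j) (s' j)
  unfold bpFacMsg
  rw [← hfiber]
  refine sum_congr rfl fun s _ => sum_congr rfl fun s' _ => ?_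
  rw [Fintype.prod_subtype_eq_mul_prod_filter_ne
    (fun j : {j : V // (j, c) ∈ E} => mv j.1 c j.2 (s j) (s' j)) h]
  ring

theorem bpFacMsg_updMsg (f : DeFGFactors E S) (mv : DeFGMsg E S) (k : V) (c : F)
    (h : (k, c) ∈ E) (η : S k → S k → ℂ) (t : ℝ) :
    bpFacMsg f (updMsg E S mv k c η t) k c h = bpFacMsg f mv k c h := by
  funext s s'
  refine sum_congr rfl fun _ _ => sum_congr rfl fun _ _ => congrArg _ <|
    Finset.prod_congr rfl fun j hj => ?_
  rw [updMsg_of_ne mv k c η t (fun hkc => (mem_filter.mp hj).2 hkc.1)]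

theorem Zfac_updMsg_self (f : DeFGFactors E S) (mv : DeFGMsg E S) {k : V} {c : F}
    (h : (k, c) ∈ E) (η : S k → S k → ℂ) (t : ℝ) :
    Zfac E S f (updMsg E S mv k c η t) c =
      Zfac E S f mv c + t * pairing η (bpFacMsg f mv k c h) := by
  rw [Zfac_eq_pairing _ _ h, bpFacMsg_updMsg, updMsg_self, pairing_add_mul_left,
    ← Zfac_eq_pairing _ _ h]

end

variable [Fintype V] [Fintype F]

theorem Zinduced_nonneg {f : DeFGFactors E S} {mv mf : DeFGMsg E S}
    (hf : ∀ a, (of fun s s' => f a s s').PosSemidef)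
    (hmv : ∀ j a h, (of (mv j a h)).PosSemidef) (hmf : ∀ j a h, (of (mf j a h)).PosSemidef) :
    0 ≤ Zinduced E S f mv mf :=
  div_nonneg
    (mul_nonneg (prod_nonneg fun a _ => Zfac_nonneg (hf a) fun j h => hmv j a h)
      (prod_nonneg fun j _ => Zvar_nonneg fun a h => hmf j a h))
    (prod_nonneg fun e _ => Zedge_nonneg (hmv _ _ e.2) (hmf _ _ e.2))

theorem Zinduced_updMsg_mf_eq {f : DeFGFactors E S} {mv mf : DeFGMsg E S}
    (hZe : ∀ j a h, Zedge E S mv mf j a h ≠ 0) (hZf : ∀ a, Zfac E S f mv a ≠ 0)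
    (hZv : ∀ j, Zvar E S mf j ≠ 0) {k : V} {c : F} (h : (k, c) ∈ E) (η : S k → S k → ℂ) :
    ∃ P Q : ℂ, P ≠ 0 ∧ Q ≠ 0 ∧ ∀ t : ℝ, Zinduced E S f mv (updMsg E S mf k c η t) =
      P * (Zvar E S mf k + t * pairing η (bpVarMsg mf k c)) /
        (Q * (Zedge E S mv mf k c h + t * pairing (mv k c h) η)) := by
  let e₀ : {p : V × F // p ∈ E} := ⟨(k, c), h⟩
  refine ⟨(∏ a, Zfac E S f mv a) * ∏ j ∈ univ.erase k, Zvar E S mf j,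
    ∏ e ∈ univ.erase e₀, Zedge E S mv mf e.1.1 e.1.2 e.2,
    mul_ne_zero (prod_ne_zero_iff.mpr fun a _ => hZf a) (prod_ne_zero_iff.mpr fun j _ => hZv j),
    prod_ne_zero_iff.mpr fun e _ => hZe _ _ e.2, fun t => ?_⟩
  have hvar : ∏ j, Zvar E S (updMsg E S mf k c η t) j =
      Zvar E S (updMsg E S mf k c η t) k * ∏ j ∈ univ.erase k, Zvar E S mf j :=
    Fintype.prod_eq_mul_prod_erase_of_ne k fun j hj => Zvar_updMsg_of_ne mf k c η t hj
  have hedge : ∏ e : {p : V × F // p ∈ E}, Zedge E S mv (updMsg E S mf k c η t) e.1.1 e.1.2 e.2 =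
      Zedge E S mv (updMsg E S mf k c η t) k c h *
        ∏ e ∈ univ.erase e₀, Zedge E S mv mf e.1.1 e.1.2 e.2 :=
    Fintype.prod_eq_mul_prod_erase_of_ne e₀ fun e he =>
      Zedge_updMsg_mf_of_ne mv mf k c η t (ne_of_ne_edge he) e.2
  rw [Zinduced, hvar, hedge, Zvar_updMsg_self mf h, Zedge_updMsg_mf_self]
  congr 1 <;> ring

theorem forall_deriv_Zinduced_updMsg_mf_eq_zero_iff {f : DeFGFactors E S} {mv mf : DeFGMsg E S}
    (hZe : ∀ j a h, Zedge E S mv mf j a h ≠ 0) (hZf : ∀ a, Zfac E S f mv a ≠ 0)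
    (hZv : ∀ j, Zvar E S mf j ≠ 0) {k : V} {c : F} (h : (k, c) ∈ E)
    (hmv : (of (mv k c h)).PosSemidef) (hmf : ∀ a h, (of (mf k a h)).PosSemidef) :
    (∀ η : S k → S k → ℂ, (of η).PosSemidef →
        deriv (fun t : ℝ => Zinduced E S f mv (updMsg E S mf k c η t)) 0 = 0) ↔
      ∃ γ : ℝ, 0 < γ ∧ ∀ s s', mv k c h s s' = γ * bpVarMsg mf k c s s' := by
  have hZkc : 0 < pairing (mv k c h) (mf k c h) :=
    lt_of_le_of_ne (Zedge_nonneg hmv (hmf c h)) (hZe k c h).symm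
  have hZk : 0 < pairing (mf k c h) (bpVarMsg mf k c) :=
    Zvar_eq_pairing mf h ▸ lt_of_le_of_ne (Zvar_nonneg hmf) (hZv k).symm
  rw [← forall_pairing_eq_iff_exists_pos_mul hZkc hZk]
  refine forall₂_congr fun η _ => ?_
  obtain ⟨P, Q, hP, hQ, hZ⟩ := Zinduced_updMsg_mf_eq hZe hZf hZv h η
  rw [funext hZ, deriv_mul_affine_div_mul_affine_eq_zero_iff hP hQ (hZe k c h),
    Zedge_eq_pairing, Zvar_eq_pairing mf h, pairing_comm (mv k c h) η]

variable [∀ j, DecidableEq (S j)]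

theorem Zinduced_updMsg_mv_eq {f : DeFGFactors E S} {mv mf : DeFGMsg E S}
    (hZe : ∀ j a h, Zedge E S mv mf j a h ≠ 0) (hZf : ∀ a, Zfac E S f mv a ≠ 0)
    (hZv : ∀ j, Zvar E S mf j ≠ 0) {k : V} {c : F} (h : (k, c) ∈ E) (η : S k → S k → ℂ) :
    ∃ P Q : ℂ, P ≠ 0 ∧ Q ≠ 0 ∧ ∀ t : ℝ, Zinduced E S f (updMsg E S mv k c η t) mf =
      P * (Zfac E S f mv c + t * pairing η (bpFacMsg f mv k c h)) /
        (Q * (Zedge E S mv mf k c h + t * pairing η (mf k c h))) := by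
  let e₀ : {p : V × F // p ∈ E} := ⟨(k, c), h⟩
  refine ⟨(∏ a ∈ univ.erase c, Zfac E S f mv a) * ∏ j, Zvar E S mf j,
    ∏ e ∈ univ.erase e₀, Zedge E S mv mf e.1.1 e.1.2 e.2,
    mul_ne_zero (prod_ne_zero_iff.mpr fun a _ => hZf a) (prod_ne_zero_iff.mpr fun j _ => hZv j),
    prod_ne_zero_iff.mpr fun e _ => hZe _ _ e.2, fun t => ?_⟩
  have hfac : ∏ a, Zfac E S f (updMsg E S mv k c η t) a =
      Zfac E S f (updMsg E S mv k c η t) c * ∏ a ∈ univ.erase c, Zfac E S f mv a :=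
    Fintype.prod_eq_mul_prod_erase_of_ne c fun a ha => Zfac_updMsg_of_ne f mv k c η t ha
  have hedge : ∏ e : {p : V × F // p ∈ E}, Zedge E S (updMsg E S mv k c η t) mf e.1.1 e.1.2 e.2 =
      Zedge E S (updMsg E S mv k c η t) mf k c h *
        ∏ e ∈ univ.erase e₀, Zedge E S mv mf e.1.1 e.1.2 e.2 :=
    Fintype.prod_eq_mul_prod_erase_of_ne e₀ fun e he =>
      Zedge_updMsg_mv_of_ne mv mf k c η t (ne_of_ne_edge he) e.2
  rw [Zinduced, hfac, hedge, Zfac_updMsg_self f mv h, Zedge_updMsg_mv_self]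
  congr 1 <;> ring

theorem forall_deriv_Zinduced_updMsg_mv_eq_zero_iff {f : DeFGFactors E S} {mv mf : DeFGMsg E S}
    (hZe : ∀ j a h, Zedge E S mv mf j a h ≠ 0) (hZf : ∀ a, Zfac E S f mv a ≠ 0)
    (hZv : ∀ j, Zvar E S mf j ≠ 0) {k : V} {c : F} (h : (k, c) ∈ E)
    (hf : (of fun s s' => f c s s').PosSemidef) (hmv : ∀ j h, (of (mv j c h)).PosSemidef)
    (hmf : (of (mf k c h)).PosSemidef) :
    (∀ η : S k → S k → ℂ, (of η).PosSemidef →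
        deriv (fun t : ℝ => Zinduced E S f (updMsg E S mv k c η t) mf) 0 = 0) ↔
      ∃ δ : ℝ, 0 < δ ∧ ∀ s s', mf k c h s s' = δ * bpFacMsg f mv k c h s s' := by
  have hZkc : 0 < pairing (mf k c h) (mv k c h) :=
    pairing_comm (mv k c h) _ ▸ lt_of_le_of_ne (Zedge_nonneg (hmv k h) hmf) (hZe k c h).symm
  have hZc : 0 < pairing (mv k c h) (bpFacMsg f mv k c h) :=
    Zfac_eq_pairing f mv h ▸ lt_of_le_of_ne (Zfac_nonneg hf hmv) (hZf c).symm
  rw [← forall_pairing_eq_iff_exists_pos_mul hZkc hZc]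
  refine forall₂_congr fun η _ => ?_
  obtain ⟨P, Q, hP, hQ, hZ⟩ := Zinduced_updMsg_mv_eq hZe hZf hZv h η
  rw [funext hZ, deriv_mul_affine_div_mul_affine_eq_zero_iff hP hQ (hZe k c h),
    Zedge_eq_pairing, pairing_comm (mv k c h) (mf k c h), Zfac_eq_pairing f mv h]

end

section

variable {V F : Type} [Fintype V] [Fintype F] [DecidableEq V] [DecidableEq F]

variable (E : Finset (V × F)) (S : V → Type) [∀ j, Fintype (S j)] [∀ j, DecidableEq (S j)]

/-- For a DeFG without classical variables and PSD messages:
(i) if all edge partition sums are nonzero, the induced partition sum is a nonnegative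
real number; (ii) if moreover all factor and variable partition sums are nonzero, then the
vanishing of the directional derivatives of `Z_induced` along all PSD directions (at every
single message) is equivalent to the messages being a BP fixed point. -/
theorem stmt7
    (f : ∀ a : F, (∀ j : {j : V // (j, a) ∈ E}, S j.1) →
                  (∀ j : {j : V // (j, a) ∈ E}, S j.1) → ℂ)
    (hPSD : ∀ a : F, Matrix.PosSemidef (Matrix.of fun s st => f a s st))
    (mv mf : DeFGMsg E S)
    (hmv : ∀ (j : V) (a : F) (h : (j, a) ∈ E), Matrix.PosSemidef (Matrix.of (mv j a h)))
    (hmf : ∀ (j : V) (a : F) (h : (j, a) ∈ E), Matrix.PosSemidef (Matrix.of (mf j a h))) :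
    ((∀ (j : V) (a : F) (h : (j, a) ∈ E), Zedge E S mv mf j a h ≠ 0) →
      (Zinduced E S f mv mf).im = 0 ∧ 0 ≤ (Zinduced E S f mv mf).re) ∧
    ((∀ (j : V) (a : F) (h : (j, a) ∈ E), Zedge E S mv mf j a h ≠ 0) →
     (∀ a : F, Zfac E S f mv a ≠ 0) → (∀ j : V, Zvar E S mf j ≠ 0) →
      ((∀ (k : V) (c : F) (h : (k, c) ∈ E) (η : S k → S k → ℂ),
          Matrix.PosSemidef (Matrix.of η) →
            deriv (fun t : ℝ => Zinduced E S f mv (updMsg E S mf k c η t)) 0 = 0 ∧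
            deriv (fun t : ℝ => Zinduced E S f (updMsg E S mv k c η t) mf) 0 = 0)
        ↔
       (∀ (k : V) (c : F) (h : (k, c) ∈ E),
          (∃ γ : ℝ, 0 < γ ∧ ∀ sk stk : S k,
            mv k c h sk stk = (γ : ℂ) *
              ∏ a ∈ univ.filter (fun a : {a : F // (k, a) ∈ E} => (a : F) ≠ c),
                mf k a.1 a.2 sk stk) ∧
          (∃ δ : ℝ, 0 < δ ∧ ∀ sk stk : S k,
            mf k c h sk stk = (δ : ℂ) *
              ∑ s ∈ univ.filter
                  (fun s : ∀ j : {j : V // (j, c) ∈ E}, S j.1 => s ⟨k, h⟩ = sk),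
                ∑ st ∈ univ.filter
                    (fun st : ∀ j : {j : V // (j, c) ∈ E}, S j.1 => st ⟨k, h⟩ = stk),
                  f c s st *
                    ∏ j ∈ univ.filter (fun j : {j : V // (j, c) ∈ E} => (j : V) ≠ k),
                      mv j.1 c j.2 (s j) (st j))))) := by
  refine ⟨fun _ => ?_, fun hZe hZf hZv => forall₃_congr fun k c h => ?_⟩
  · obtain ⟨hre, him⟩ := Complex.nonneg_iff.mp (Zinduced_nonneg hPSD hmv hmf)
    exact ⟨him.symm, hre⟩
  · simp only [imp_and, forall_and]
    exact and_congr
      (forall_deriv_Zinduced_updMsg_mf_eq_zero_iff hZe hZf hZv h (hmv k c h) (hmf k))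
      (forall_deriv_Zinduced_updMsg_mv_eq_zero_iff hZe hZf hZv h (hPSD c) (hmv · c) (hmf k c h))

end
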